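/- Let μ ∈ ℝ, σ > 0, t ∈ ℝ, σ_γ > 0 and y ∈ ℝ, and let W, N, N′ be independent standard normal random variables. Then the threshold-weighted CRPS of the Gaussian predictive distribution Φ_{μ,σ²} at observation y, with Gaussian weighting measure γ₂ centered at t with scale σ_γ, satisfies CRPS_{γ₂}(Φ_{μ,σ²}, y) = P( σ_γ·W + σ·N ≤ t − μ and σ_γ·W + σ·N′ ≤ t − μ ) − 2·P( σ_γ·W + σ·N ≤ t − μ and σ_γ·W ≤ t − y ) + Φ((t − y)/σ_γ). (The two probabilities are the bivariate Gaussian CDFs at (0,0) with means (μ−t, μ−t), variances σ_γ²+σ² and covariance σ_γ², respectively means (μ−t, y−t), variances (σ_γ²+σ², σ_γ²) and covariance σ_γ².) -/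

import Mathlib

open MeasureTheory ProbabilityTheory Set

noncomputable section

/-- The standard normal distribution `N(0,1)` on `ℝ`. -/
def stdNormal : Measure ℝ := gaussianReal 0 1

/-- The standard normal CDF `Φ`. -/
def Phi (x : ℝ) : ℝ := (stdNormal (Iic x)).toReal

/-- The standard normal PDF `φ`. -/
def stdPDF (x : ℝ) : ℝ := (Real.sqrt (2 * Real.pi))⁻¹ * Real.exp (-(x ^ 2) / 2)

/-- The CDF of the normal distribution `N(μ, σ²)`: `Φ_{μ,σ²}(u) = Φ((u - μ)/σ)`. -/
def normCDF (μ σ : ℝ) (u : ℝ) : ℝ := Phi ((u - μ) / σ)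

/-- The normal distribution `N(μ, σ²)` as a measure on `ℝ`. -/
def gaussMeasure (μ σ : ℝ) : Measure ℝ := gaussianReal μ ⟨σ ^ 2, sq_nonneg σ⟩

/-- Threshold-weighted CRPS of a predictive CDF `F` at observation `y`, with weighting
measure `γ`: `∫ (F u - 1{y ≤ u})² dγ(u)`. -/
def twCRPS (γ : Measure ℝ) (F : ℝ → ℝ) (y : ℝ) : ℝ :=
  ∫ u, (F u - (Ici y).indicator (fun _ => (1 : ℝ)) u) ^ 2 ∂γ

/-- Expected threshold-weighted CRPS of the Gaussian `N(μ, σ²)` with weighting measure `γ`: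
the expectation of `y ↦ CRPS_γ(Φ_{μ,σ²}, y)` for `y ∼ N(μ, σ²)`. -/
def etwCRPS (γ : Measure ℝ) (μ σ : ℝ) : ℝ :=
  ∫ y, twCRPS γ (normCDF μ σ) y ∂(gaussMeasure μ σ)

/-- `γ₁`: the Borel measure on `ℝ` with Lebesgue density `u ↦ 1{u ≥ t}`. -/
def gamma1 (t : ℝ) : Measure ℝ :=
  volume.withDensity ((Ici t).indicator fun _ => (1 : ENNReal))

/-- `γ₂`: the Borel measure on `ℝ` with Lebesgue density `u ↦ (1/σγ) φ((u - t)/σγ)`. -/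
def gamma2 (t σγ : ℝ) : Measure ℝ :=
  volume.withDensity fun u => ENNReal.ofReal (1 / σγ * stdPDF ((u - t) / σγ))

end

noncomputable section

instance : IsProbabilityMeasure stdNormal := by unfold stdNormal; infer_instance

lemma phi_mono : Monotone Phi := fun a b hab =>
  ENNReal.toReal_mono (measure_ne_top _ _) (measure_mono (Iic_subset_Iic.2 hab))

lemma phi_measurable : Measurable Phi := phi_mono.measurable

lemma phi_nonneg (x : ℝ) : 0 ≤ Phi x := ENNReal.toReal_nonneg

lemma phi_le_one (x : ℝ) : Phi x ≤ 1 := by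
  have := prob_le_one (μ := stdNormal) (s := Iic x)
  simpa [Phi] using ENNReal.toReal_mono ENNReal.one_ne_top this

lemma gamma2_eq (t σγ : ℝ) (hσγ : 0 < σγ) :
    gamma2 t σγ = gaussianReal t ⟨σγ^2, sq_nonneg σγ⟩ := by
  have hv : (⟨σγ^2, sq_nonneg σγ⟩ : NNReal) ≠ 0 :=
    fun h => (by positivity : (0:ℝ) < σγ^2).ne' (congrArg NNReal.toReal h)
  rw [gaussianReal_of_var_ne_zero _ hv]
  unfold gamma2
  congr 1
  ext u
  unfold gaussianPDF
  congr 1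
  unfold stdPDF gaussianPDFReal
  erw [NNReal.coe_mk]
  rw [Real.sqrt_mul (by positivity : (0:ℝ) ≤ 2 * Real.pi) (σγ^2), Real.sqrt_sq hσγ.le]
  rw [show -(((u - t) / σγ) ^ 2) / 2 = -(u - t)^2 / (2 * σγ^2) by rw [div_pow]; ring]
  field_simp

lemma stdNormal_map (t σγ : ℝ) :
    stdNormal.map (fun w => -σγ * w + t) = gaussianReal t ⟨σγ^2, sq_nonneg σγ⟩ := by
  have h1 : stdNormal.map (fun w => (-σγ) * w) = gaussianReal 0 ⟨σγ^2, sq_nonneg σγ⟩ := by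
    rw [stdNormal, gaussianReal_map_const_mul]
    congr 1
    · ring
    · rw [mul_one]
      exact Subtype.ext (by simp)
  have hcomp : (fun w : ℝ => -σγ * w + t) = (· + t) ∘ (fun w => (-σγ) * w) := rfl
  rw [hcomp, ← Measure.map_map (measurable_id'.add_const t) (measurable_const_mul _), h1,
    gaussianReal_map_add_const (μ := 0) (v := ⟨σγ^2, sq_nonneg σγ⟩), zero_add]

lemma prod3_toReal (S : Set (ℝ × ℝ × ℝ)) (hS : MeasurableSet S) :
    ((stdNormal.prod (stdNormal.prod stdNormal)) S).toReal
      = ∫ w, ((stdNormal.prod stdNormal) (Prod.mk w ⁻¹' S)).toReal ∂stdNormal := by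
  rw [Measure.prod_apply hS]
  exact (integral_toReal (measurable_measure_prodMk_left hS).aemeasurable
    (ae_of_all _ fun w => measure_lt_top _ _)).symm

end

theorem stmt_1 (μ σ t σγ y : ℝ) (hσ : 0 < σ) (hσγ : 0 < σγ) :
    twCRPS (gamma2 t σγ) (normCDF μ σ) y =
      ((stdNormal.prod (stdNormal.prod stdNormal))
          {p : ℝ × ℝ × ℝ | σγ * p.1 + σ * p.2.1 ≤ t - μ ∧ σγ * p.1 + σ * p.2.2 ≤ t - μ}).toReal
        - 2 * ((stdNormal.prod (stdNormal.prod stdNormal))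
          {p : ℝ × ℝ × ℝ | σγ * p.1 + σ * p.2.1 ≤ t - μ ∧ σγ * p.1 ≤ t - y}).toReal
        + Phi ((t - y) / σγ) := by
  set d := (t - y) / σγ with hd
  set c : ℝ → ℝ := fun w => (t - μ - σγ * w) / σ with hcdef
  have hcm : Measurable c := by fun_prop
  have hA : Measurable fun w => Phi (c w) := phi_measurable.comp hcm
  have hI : Measurable ((Iic d).indicator (fun _ => (1:ℝ))) :=
    measurable_const.indicator measurableSet_Iic
  set A := fun w => Phi (c w) with hAdef
  set I := fun w => (Iic d).indicator (fun _ => (1:ℝ)) w with hIdef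
  -- Step 1: change of variables
  have hmap : twCRPS (gamma2 t σγ) (normCDF μ σ) y
      = ∫ w, (A w - I w) ^ 2 ∂stdNormal := by
    unfold twCRPS
    rw [gamma2_eq t σγ hσγ, ← stdNormal_map t σγ, integral_map]
    · apply integral_congr_ae; filter_upwards with w
      have h1 : normCDF μ σ (-σγ * w + t) = A w := by
        unfold normCDF
        simp only [hAdef, hcdef]
        congr 1; ring
      have hiff : y ≤ -σγ * w + t ↔ w ≤ d := by
        rw [hd, le_div_iff₀ hσγ]; constructor <;> intro h <;> nlinarith
      have h2 : (Ici y).indicator (fun _ => (1:ℝ)) (-σγ * w + t) = I w := by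
        by_cases hw : w ≤ d
        · rw [indicator_of_mem (mem_Ici.mpr (hiff.mpr hw))]
          simp only [hIdef, indicator_of_mem (mem_Iic.mpr hw)]
        · rw [indicator_of_notMem (fun h => hw (hiff.mp (mem_Ici.mp h)))]
          simp only [hIdef, indicator_of_notMem (fun h => hw (mem_Iic.mp h))]
      rw [h1, h2]
    · exact (by fun_prop : Measurable fun w : ℝ => -σγ * w + t).aemeasurable
    · apply Measurable.aestronglyMeasurable
      apply Measurable.pow _ measurable_const
      exact ((phi_measurable.comp (by fun_prop)).sub
        (measurable_const.indicator measurableSet_Ici))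
  -- bounds
  have hA0 : ∀ w, 0 ≤ A w := fun w => phi_nonneg _
  have hA1 : ∀ w, A w ≤ 1 := fun w => phi_le_one _
  have hI01 : ∀ w, 0 ≤ I w ∧ I w ≤ 1 := by
    intro w; simp only [hIdef, indicator_apply]
    split <;> norm_num
  -- integrability
  have hIA2 : Integrable (fun w => A w ^ 2) stdNormal :=
    ⟨(hA.pow_const 2).aestronglyMeasurable, HasFiniteIntegral.of_bounded (C := 1)
      (ae_of_all _ fun w => by
        rw [Real.norm_eq_abs, abs_of_nonneg (by positivity)]
        nlinarith [hA0 w, hA1 w])⟩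
  have hIAI : Integrable (fun w => A w * I w) stdNormal :=
    ⟨(hA.mul hI).aestronglyMeasurable, HasFiniteIntegral.of_bounded (C := 1)
      (ae_of_all _ fun w => by
        rw [Real.norm_eq_abs, abs_of_nonneg (mul_nonneg (hA0 w) (hI01 w).1)]
        nlinarith [hA0 w, hA1 w, (hI01 w).1, (hI01 w).2])⟩
  have hII : Integrable I stdNormal :=
    ⟨hI.aestronglyMeasurable, HasFiniteIntegral.of_bounded (C := 1)
      (ae_of_all _ fun w => by
        rw [Real.norm_eq_abs, abs_of_nonneg (hI01 w).1]; exact (hI01 w).2)⟩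
  -- Step 2: expand the square
  have hpt : ∀ w, (A w - I w) ^ 2 = A w ^ 2 - 2 * (A w * I w) + I w := by
    intro w
    by_cases hw : w ≤ d
    · simp only [hIdef, indicator_of_mem (mem_Iic.mpr hw)]; ring
    · simp only [hIdef, indicator_of_notMem (fun h => hw (mem_Iic.mp h))]; ring
  have expand : (∫ w, (A w - I w) ^ 2 ∂stdNormal)
      = (∫ w, A w ^ 2 ∂stdNormal) - 2 * (∫ w, A w * I w ∂stdNormal)
        + ∫ w, I w ∂stdNormal := by
    have h2' : Integrable (fun w => 2 * (A w * I w)) stdNormal := hIAI.const_mul 2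
    have h12 : Integrable (fun w => A w ^ 2 - 2 * (A w * I w)) stdNormal := hIA2.sub h2'
    simp_rw [hpt]
    rw [integral_add h12 hII, integral_sub hIA2 h2', integral_const_mul]
  -- Step 3: ∫ I = Phi d
  have hIint : (∫ w, I w ∂stdNormal) = Phi d := by
    simp only [hIdef]
    rw [integral_indicator_const (1:ℝ) measurableSet_Iic]
    simp [Phi, measureReal_def]
  -- Step 4: first probability term
  have hS1 : MeasurableSet {p : ℝ × ℝ × ℝ |
      σγ * p.1 + σ * p.2.1 ≤ t - μ ∧ σγ * p.1 + σ * p.2.2 ≤ t - μ} := by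
    exact (measurableSet_le (f := fun p : ℝ × ℝ × ℝ => σγ * p.1 + σ * p.2.1)
        (by fun_prop) measurable_const).inter
      (measurableSet_le (f := fun p : ℝ × ℝ × ℝ => σγ * p.1 + σ * p.2.2)
        (by fun_prop) measurable_const)
  have hiffn : ∀ w n : ℝ, σγ * w + σ * n ≤ t - μ ↔ n ≤ c w := by
    intro w n
    simp only [hcdef]
    rw [le_div_iff₀ hσ]
    constructor <;> intro h <;> nlinarith
  have hT1 : ((stdNormal.prod (stdNormal.prod stdNormal))
      {p : ℝ × ℝ × ℝ | σγ * p.1 + σ * p.2.1 ≤ t - μ ∧ σγ * p.1 + σ * p.2.2 ≤ t - μ}).toReal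
      = ∫ w, A w ^ 2 ∂stdNormal := by
    rw [prod3_toReal _ hS1]
    apply integral_congr_ae; filter_upwards with w
    have hpre : Prod.mk w ⁻¹' {p : ℝ × ℝ × ℝ |
        σγ * p.1 + σ * p.2.1 ≤ t - μ ∧ σγ * p.1 + σ * p.2.2 ≤ t - μ}
        = Iic (c w) ×ˢ Iic (c w) := by
      ext q
      simp only [mem_preimage, mem_setOf_eq, mem_prod, mem_Iic]
      rw [hiffn w q.1, hiffn w q.2]
    rw [hpre, Measure.prod_prod, ENNReal.toReal_mul]
    simp only [hAdef, Phi, sq]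
  -- Step 5: second probability term
  have hS2 : MeasurableSet {p : ℝ × ℝ × ℝ |
      σγ * p.1 + σ * p.2.1 ≤ t - μ ∧ σγ * p.1 ≤ t - y} := by
    exact (measurableSet_le (f := fun p : ℝ × ℝ × ℝ => σγ * p.1 + σ * p.2.1)
        (by fun_prop) measurable_const).inter
      (measurableSet_le (f := fun p : ℝ × ℝ × ℝ => σγ * p.1)
        (by fun_prop) measurable_const)
  have hT2 : ((stdNormal.prod (stdNormal.prod stdNormal))
      {p : ℝ × ℝ × ℝ | σγ * p.1 + σ * p.2.1 ≤ t - μ ∧ σγ * p.1 ≤ t - y}).toReal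
      = ∫ w, A w * I w ∂stdNormal := by
    rw [prod3_toReal _ hS2]
    apply integral_congr_ae; filter_upwards with w
    by_cases hw : w ≤ d
    · have hy2 : σγ * w ≤ t - y := by
        rw [hd, le_div_iff₀ hσγ] at hw; nlinarith
      have hpre : Prod.mk w ⁻¹' {p : ℝ × ℝ × ℝ |
          σγ * p.1 + σ * p.2.1 ≤ t - μ ∧ σγ * p.1 ≤ t - y} = Iic (c w) ×ˢ univ := by
        ext q
        simp only [mem_preimage, mem_setOf_eq, mem_prod, mem_Iic, mem_univ, and_true]
        constructor
        · exact fun h' => (hiffn w q.1).mp h'.1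
        · exact fun h' => ⟨(hiffn w q.1).mpr h', hy2⟩
      rw [hpre, Measure.prod_prod, measure_univ, mul_one]
      simp only [hAdef, hIdef, Phi, indicator_of_mem (mem_Iic.mpr hw), mul_one]
    · have hpre : Prod.mk w ⁻¹' {p : ℝ × ℝ × ℝ |
          σγ * p.1 + σ * p.2.1 ≤ t - μ ∧ σγ * p.1 ≤ t - y} = (∅ : Set (ℝ × ℝ)) := by
        ext q
        simp only [mem_preimage, mem_setOf_eq, mem_empty_iff_false, iff_false, not_and]
        intro _ h2
        exact hw (by rw [hd, le_div_iff₀ hσγ]; nlinarith)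
      rw [hpre]
      simp only [hIdef, indicator_of_notMem (fun h => hw (mem_Iic.mp h)), mul_zero,
        measure_empty, ENNReal.toReal_zero]
  rw [hmap, expand, hIint, hT1, hT2]
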